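/- Suppose $A_1, A_2, B : (0,1)\to\mathbb{R}$ are differentiable with $B > 0$, satisfy $B(s)^2 = s^{-2}A_1(s) + (1-s)^{-2}A_2(s)$ and $s(1-s)B(s)B'(s) = -(A_1'(s)+A_2'(s))$. Then $\frac{1+s}{s}A_1'(s) + \frac{2-s}{1-s}A_2'(s) - \frac{2(1-s)}{s^2}A_1(s) + \frac{2s}{(1-s)^2}A_2(s) = 0$ for all $s \in (0,1)$. -/

import Mathlib

/-! Differentiate `B² = A₁/s² + A₂/(1-s)²` on the open interval to get
`2BB' = A₁'/s² - 2A₁/s³ + A₂'/(1-s)² + 2A₂/(1-s)³`; multiplying by `s(1-s)` and adding twice the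
second equation `s(1-s)BB' = -(A₁'+A₂')` eliminates `B` and gives the claimed identity. -/

theorem hasDerivAt_div_sq_add_div_one_sub_sq {f g : ℝ → ℝ} {f' g' s : ℝ}
    (hf : HasDerivAt f f' s) (hg : HasDerivAt g g' s) (hs₀ : s ≠ 0) (hs₁ : 1 - s ≠ 0) :
    HasDerivAt (fun x => f x / x ^ 2 + g x / (1 - x) ^ 2)
      (f' / s ^ 2 - 2 * f s / s ^ 3 + g' / (1 - s) ^ 2 + 2 * g s / (1 - s) ^ 3) s := by
  have hsq : HasDerivAt (fun x : ℝ => x ^ 2) (2 * s) s := by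
    simpa using hasDerivAt_pow 2 s
  have hsq' : HasDerivAt (fun x : ℝ => (1 - x) ^ 2) (-(2 * (1 - s))) s := by
    simpa using ((hasDerivAt_id s).const_sub 1).fun_pow 2
  refine ((hf.fun_div hsq (pow_ne_zero 2 hs₀)).add
    (hg.fun_div hsq' (pow_ne_zero 2 hs₁))).congr_deriv ?_
  field_simp
  ring

theorem stmt_9_general (A₁ A₂ B : ℝ → ℝ)
    (hA₁ : ∀ s ∈ Set.Ioo (0 : ℝ) 1, DifferentiableAt ℝ A₁ s)
    (hA₂ : ∀ s ∈ Set.Ioo (0 : ℝ) 1, DifferentiableAt ℝ A₂ s)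
    (hB : ∀ s ∈ Set.Ioo (0 : ℝ) 1, DifferentiableAt ℝ B s)
    (heq1 : ∀ s ∈ Set.Ioo (0 : ℝ) 1, (B s) ^ 2 = A₁ s / s ^ 2 + A₂ s / (1 - s) ^ 2)
    (heq2 : ∀ s ∈ Set.Ioo (0 : ℝ) 1,
      s * (1 - s) * B s * deriv B s = -(deriv A₁ s + deriv A₂ s)) :
    ∀ s ∈ Set.Ioo (0 : ℝ) 1,
      (1 + s) / s * deriv A₁ s + (2 - s) / (1 - s) * deriv A₂ s
        - 2 * (1 - s) / s ^ 2 * A₁ s + 2 * s / (1 - s) ^ 2 * A₂ s = 0 := by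
  intro s hs
  have hs₀ : s ≠ 0 := hs.1.ne'
  have hs₁ : 1 - s ≠ 0 := sub_ne_zero.mpr hs.2.ne'
  have hB_sq : HasDerivAt (fun x => B x ^ 2) (2 * B s * deriv B s) s := by
    simpa [mul_comm] using (hB s hs).hasDerivAt.fun_pow 2
  have heq1_nhds : (fun x => A₁ x / x ^ 2 + A₂ x / (1 - x) ^ 2) =ᶠ[nhds s] fun x => B x ^ 2 :=
    Filter.eventually_of_mem (isOpen_Ioo.mem_nhds hs) fun x hx => (heq1 x hx).symm
  have hderiv : 2 * B s * deriv B s = deriv A₁ s / s ^ 2 - 2 * A₁ s / s ^ 3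
      + deriv A₂ s / (1 - s) ^ 2 + 2 * A₂ s / (1 - s) ^ 3 :=
    hB_sq.unique <| (hasDerivAt_div_sq_add_div_one_sub_sq (hA₁ s hs).hasDerivAt
      (hA₂ s hs).hasDerivAt hs₀ hs₁).congr_of_eventuallyEq heq1_nhds.symm
  field_simp at hderiv ⊢
  linear_combination 2 * s ^ 2 * (1 - s) ^ 2 * heq2 s hs - hderiv

/-- From `B² = A₁/s² + A₂/(1-s)²` and `s(1-s)BB' = -(A₁'+A₂')` with `B > 0` on `(0,1)`
it follows that `((1+s)/s)A₁' + ((2-s)/(1-s))A₂' - (2(1-s)/s²)A₁ + (2s/(1-s)²)A₂ = 0`. -/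
theorem stmt_9 (A₁ A₂ B : ℝ → ℝ)
    (hA₁ : ∀ s ∈ Set.Ioo (0 : ℝ) 1, DifferentiableAt ℝ A₁ s)
    (hA₂ : ∀ s ∈ Set.Ioo (0 : ℝ) 1, DifferentiableAt ℝ A₂ s)
    (hB : ∀ s ∈ Set.Ioo (0 : ℝ) 1, DifferentiableAt ℝ B s)
    (hBpos : ∀ s ∈ Set.Ioo (0 : ℝ) 1, 0 < B s)
    (heq1 : ∀ s ∈ Set.Ioo (0 : ℝ) 1, (B s) ^ 2 = A₁ s / s ^ 2 + A₂ s / (1 - s) ^ 2)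
    (heq2 : ∀ s ∈ Set.Ioo (0 : ℝ) 1,
      s * (1 - s) * B s * deriv B s = -(deriv A₁ s + deriv A₂ s)) :
    ∀ s ∈ Set.Ioo (0 : ℝ) 1,
      (1 + s) / s * deriv A₁ s + (2 - s) / (1 - s) * deriv A₂ s
        - 2 * (1 - s) / s ^ 2 * A₁ s + 2 * s / (1 - s) ^ 2 * A₂ s = 0 :=
  stmt_9_general A₁ A₂ B hA₁ hA₂ hB heq1 heq2
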